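/- arXiv:2511.13977 — 2 statements merged into one kernel-verified Lean document; each statement's English description precedes it below -/
import Mathlib

section
/- Fix reals 1 = σ_1 ≥ σ_2 ≥ … ≥ σ_d > 0, set S_d := ∏_{i=1}^d (−σ_i, σ_i], B_0 := S_d and, for n ≥ 1, B_n := ∏_{i=1}^d (−2^n σ_i, 2^n σ_i] ∖ ∏_{i=1}^d (−2^{n−1} σ_i, 2^{n−1} σ_i]. Let μ and ν be probability measures on ℝ^d with finite second moments. Then W₂²(μ, ν) ≤ 2d Σ_{n≥0} 2^{2n} [ | μ(B_n) − ν(B_n) | + min(μ(B_n), ν(B_n)) · W₂²( R_{B_n}μ, R_{B_n}ν ) ], where terms with min(μ(B_n), ν(B_n)) = 0 contribute only the first summand. -/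
open MeasureTheory ProbabilityTheory Real
open scoped ENNReal NNReal BigOperators

/-- Squared Wasserstein-2 distance: infimum over couplings of `∫ ‖x - y‖²`. -/
noncomputable def W2sq {E : Type*} [NormedAddCommGroup E] [MeasurableSpace E]
    (μ ν : Measure E) : ℝ :=
  sInf { r : ℝ | ∃ γ : Measure (E × E), IsProbabilityMeasure γ ∧
    γ.map Prod.fst = μ ∧ γ.map Prod.snd = ν ∧ r = ∫ p, ‖p.1 - p.2‖ ^ 2 ∂γ }

/-- Empirical measure of `N` points. -/
noncomputable def empMeasure {E : Type*} [MeasurableSpace E] {N : ℕ}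
    (y : Fin N → E) : Measure E :=
  ((N : ℝ≥0∞))⁻¹ • ∑ i, Measure.dirac (y i)

/-- Sixth-moment scale of the `i`-th coordinate: `σ_i = (∫ y_i^6 dμ)^{1/6}`. -/
noncomputable def sigma6 {d : ℕ} (μ : Measure (EuclideanSpace ℝ (Fin d))) (i : Fin d) : ℝ :=
  (∫ y, y i ^ 6 ∂μ) ^ ((1 : ℝ) / 6)

/-- `M = (∫ Σ_i y_i^6 dμ)^{1/6}`. -/
noncomputable def sixthM {d : ℕ} (μ : Measure (EuclideanSpace ℝ (Fin d))) : ℝ :=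
  (∫ y, ∑ i, y i ^ 6 ∂μ) ^ ((1 : ℝ) / 6)

/-- The box `∏_i (-c σ_i, c σ_i]`. -/
def box {d : ℕ} (σ : Fin d → ℝ) (c : ℝ) : Set (EuclideanSpace ℝ (Fin d)) :=
  {x | ∀ i, -(c * σ i) < x i ∧ x i ≤ c * σ i}

/-- The annuli `B_0 = S_d`, `B_n = ∏(-2^n σ_i, 2^n σ_i] \ ∏(-2^{n-1} σ_i, 2^{n-1} σ_i]`. -/
def Bset {d : ℕ} (σ : Fin d → ℝ) : ℕ → Set (EuclideanSpace ℝ (Fin d))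
  | 0 => box σ 1
  | n + 1 => box σ (2 ^ (n + 1)) \ box σ (2 ^ n)

/-- `R_{B}μ`: pushforward of the normalized restriction `μ|_B / μ(B)` by `x ↦ 2^{-n} x`. -/
noncomputable def RB {d : ℕ} (μ : Measure (EuclideanSpace ℝ (Fin d)))
    (B : Set (EuclideanSpace ℝ (Fin d))) (n : ℕ) : Measure (EuclideanSpace ℝ (Fin d)) :=
  Measure.map (fun x => ((2 : ℝ) ^ n)⁻¹ • x) ((μ B)⁻¹ • μ.restrict B)

/-- The grid cell `2^{1-ℓ} k + (-2^{-ℓ}, 2^{-ℓ}]^d`, `k ∈ ℤ^d`. -/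
def gridCell (d : ℕ) (ℓ : ℕ) (k : Fin d → ℤ) : Set (EuclideanSpace ℝ (Fin d)) :=
  {x | ∀ i, 2 ^ (1 - (ℓ : ℤ)) * (k i : ℝ) - 2 ^ (-(ℓ : ℤ)) < x i ∧
    x i ≤ 2 ^ (1 - (ℓ : ℤ)) * (k i : ℝ) + 2 ^ (-(ℓ : ℤ))}

/-- `D_2(μ, ν) = (3/2) Σ_{ℓ≥1} 2^{-2ℓ} Σ_{F ∈ 𝒫_ℓ} |μ(F) - ν(F)|`, where `𝒫_ℓ` is the
minimal family of level-`ℓ` grid cells covering `S_d`. -/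
noncomputable def D2dist {d : ℕ} (σ : Fin d → ℝ)
    (μ ν : Measure (EuclideanSpace ℝ (Fin d))) : ℝ :=
  (3 / 2) * ∑' ℓ : ℕ, (2 : ℝ) ^ (-2 * ((ℓ : ℤ) + 1)) *
    ∑' F : {k : Fin d → ℤ // (gridCell d (ℓ + 1) k ∩ box σ 1).Nonempty},
      |(μ (gridCell d (ℓ + 1) F.1)).toReal - (ν (gridCell d (ℓ + 1) F.1)).toReal|

/-- `𝒟_2(μ, ν) = Σ_{n≥0} 2^{2n} [ |μ(B_n) - ν(B_n)| + (μ(B_n) ∧ ν(B_n)) D_2(R_{B_n}μ, R_{B_n}ν) ]`. -/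
noncomputable def Dcal2 {d : ℕ} (σ : Fin d → ℝ)
    (μ ν : Measure (EuclideanSpace ℝ (Fin d))) : ℝ :=
  ∑' n : ℕ, (2 : ℝ) ^ (2 * n) *
    (|(μ (Bset σ n)).toReal - (ν (Bset σ n)).toReal| +
      min (μ (Bset σ n)).toReal (ν (Bset σ n)).toReal *
        D2dist σ (RB μ (Bset σ n) n) (RB ν (Bset σ n) n))

/-!
Glue a coupling of `μ` and `ν` annulus by annulus. On `B_n` the common mass
`min (μ B_n) (ν B_n)` is transported by a near-optimal coupling of `R_{B_n}μ` and `R_{B_n}ν`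
dilated by `2 ^ n`, which multiplies its cost by `2 ^ (2 n)`. The leftover masses
`μ B_n - min` and `ν B_n - min` have the same total, and are coupled independently; since
`‖x‖² ≤ d 4 ^ n` on `B_n` (as `σ_i ≤ 1`), this costs at most `2 d Σ 4 ^ n |μ B_n - ν B_n|`.
The finite second moments make the bound finite, because `‖x‖ ≥ 2 ^ n min σ` on `B_{n+1}`.
-/

section Coupling

variable {α : Type*} [MeasurableSpace α]

def IsCoupling (γ : Measure (α × α)) (μ ν : Measure α) : Prop :=
  γ.map Prod.fst = μ ∧ γ.map Prod.snd = ν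

namespace IsCoupling

variable {γ γ' : Measure (α × α)} {μ ν μ' ν' : Measure α}

lemma measure_univ_fst (h : IsCoupling γ μ ν) : γ Set.univ = μ Set.univ := by
  rw [← h.1, Measure.map_apply measurable_fst MeasurableSet.univ, Set.preimage_univ]

lemma measure_univ_snd (h : IsCoupling γ μ ν) : γ Set.univ = ν Set.univ := by
  rw [← h.2, Measure.map_apply measurable_snd MeasurableSet.univ, Set.preimage_univ]

lemma isProbabilityMeasure [IsProbabilityMeasure μ] (h : IsCoupling γ μ ν) :
    IsProbabilityMeasure γ :=
  ⟨by rw [h.measure_univ_fst, measure_univ]⟩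

lemma smul (h : IsCoupling γ μ ν) (c : ℝ≥0∞) : IsCoupling (c • γ) (c • μ) (c • ν) :=
  ⟨by rw [Measure.map_smul, h.1], by rw [Measure.map_smul, h.2]⟩

lemma add (h : IsCoupling γ μ ν) (h' : IsCoupling γ' μ' ν') :
    IsCoupling (γ + γ') (μ + μ') (ν + ν') :=
  ⟨by rw [Measure.map_add _ _ measurable_fst, h.1, h'.1],
    by rw [Measure.map_add _ _ measurable_snd, h.2, h'.2]⟩

lemma sum {ι : Type*} {γ : ι → Measure (α × α)} {μ ν : ι → Measure α}
    (h : ∀ i, IsCoupling (γ i) (μ i) (ν i)) :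
    IsCoupling (Measure.sum γ) (Measure.sum μ) (Measure.sum ν) :=
  ⟨by rw [Measure.map_sum measurable_fst.aemeasurable]; exact congrArg _ (funext fun i => (h i).1),
    by rw [Measure.map_sum measurable_snd.aemeasurable]; exact congrArg _ (funext fun i => (h i).2)⟩

lemma prod [IsFiniteMeasure μ] [IsFiniteMeasure ν] (hμν : μ Set.univ = ν Set.univ) :
    IsCoupling ((μ Set.univ)⁻¹ • μ.prod ν) μ ν := by
  rcases eq_or_ne (μ Set.univ) 0 with h0 | h0
  · have hμ : μ = 0 := Measure.measure_univ_eq_zero.1 h0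
    have hν : ν = 0 := Measure.measure_univ_eq_zero.1 (hμν ▸ h0)
    simp [IsCoupling, hμ, hν]
  have hcancel : (μ Set.univ)⁻¹ * μ Set.univ = 1 :=
    ENNReal.inv_mul_cancel h0 (measure_ne_top μ _)
  refine ⟨?_, ?_⟩
  · rw [Measure.map_smul, Measure.map_fst_prod, smul_smul, ← hμν, hcancel, one_smul]
  · rw [Measure.map_smul, Measure.map_snd_prod, smul_smul, hcancel, one_smul]

lemma measure_univ_eq_of_add [IsFiniteMeasure μ] (h : IsCoupling γ μ ν)
    (hmass : (μ + μ') Set.univ = (ν + ν') Set.univ) : μ' Set.univ = ν' Set.univ := by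
  have hμν : μ Set.univ = ν Set.univ := h.measure_univ_fst.symm.trans h.measure_univ_snd
  rw [Measure.add_apply, Measure.add_apply, hμν] at hmass
  exact (ENNReal.add_right_inj (hμν ▸ measure_ne_top μ _)).1 hmass

end IsCoupling

end Coupling

section TransportCost

variable {E : Type*} [NormedAddCommGroup E] [MeasurableSpace E]

noncomputable def secondMoment (μ : Measure E) : ℝ≥0∞ :=
  ∫⁻ x, ENNReal.ofReal (‖x‖ ^ 2) ∂μ

noncomputable def transportCost (γ : Measure (E × E)) : ℝ≥0∞ :=
  ∫⁻ p, ENNReal.ofReal (‖p.1 - p.2‖ ^ 2) ∂γ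

lemma secondMoment_smul (c : ℝ≥0∞) (μ : Measure E) :
    secondMoment (c • μ) = c * secondMoment μ :=
  lintegral_smul_measure c _

lemma secondMoment_sum {ι : Type*} (μ : ι → Measure E) :
    secondMoment (Measure.sum μ) = ∑' i, secondMoment (μ i) :=
  lintegral_sum_measure _ _

lemma transportCost_smul (c : ℝ≥0∞) (γ : Measure (E × E)) :
    transportCost (c • γ) = c * transportCost γ :=
  lintegral_smul_measure c _

lemma transportCost_add (γ γ' : Measure (E × E)) :
    transportCost (γ + γ') = transportCost γ + transportCost γ' :=
  lintegral_add_measure _ _ _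

lemma transportCost_sum {ι : Type*} (γ : ι → Measure (E × E)) :
    transportCost (Measure.sum γ) = ∑' i, transportCost (γ i) :=
  lintegral_sum_measure _ _

lemma W2sq_nonneg (μ ν : Measure E) : 0 ≤ W2sq μ ν :=
  Real.sInf_nonneg fun _ ⟨_, _, _, _, hr⟩ => hr ▸ integral_nonneg fun _ => by positivity

lemma IsCoupling.transportCost_le [OpensMeasurableSpace E] {γ : Measure (E × E)}
    {μ ν : Measure E} (h : IsCoupling γ μ ν) :
    transportCost γ ≤ 2 * (secondMoment μ + secondMoment ν) := by
  have hnorm : Measurable fun x : E => ENNReal.ofReal (‖x‖ ^ 2) := by fun_prop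
  have hpt : ∀ p : E × E, ENNReal.ofReal (‖p.1 - p.2‖ ^ 2) ≤
      2 * (ENNReal.ofReal (‖p.1‖ ^ 2) + ENNReal.ofReal (‖p.2‖ ^ 2)) := fun p => by
    rw [← ENNReal.ofReal_add (by positivity) (by positivity), ← ENNReal.ofReal_ofNat,
      ← ENNReal.ofReal_mul zero_le_two]
    refine ENNReal.ofReal_le_ofReal ?_
    nlinarith [norm_sub_le p.1 p.2, norm_nonneg (p.1 - p.2), sq_nonneg (‖p.1‖ - ‖p.2‖)]
  calc transportCost γ
      ≤ ∫⁻ p, 2 * (ENNReal.ofReal (‖p.1‖ ^ 2) + ENNReal.ofReal (‖p.2‖ ^ 2)) ∂γ :=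
        lintegral_mono hpt
    _ = 2 * (secondMoment μ + secondMoment ν) := by
        rw [lintegral_const_mul _ (by fun_prop), lintegral_add_left (by fun_prop),
          secondMoment, secondMoment, ← h.1, ← h.2, lintegral_map hnorm measurable_fst,
          lintegral_map hnorm measurable_snd]

variable [BorelSpace E] [SecondCountableTopology E]

lemma integral_eq_toReal_transportCost (γ : Measure (E × E)) :
    ∫ p, ‖p.1 - p.2‖ ^ 2 ∂γ = (transportCost γ).toReal :=
  integral_eq_lintegral_of_nonneg_ae (ae_of_all _ fun _ => by positivity) (by fun_prop)

lemma IsCoupling.W2sq_le {γ : Measure (E × E)} {μ ν : Measure E} [IsProbabilityMeasure μ]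
    (h : IsCoupling γ μ ν) : W2sq μ ν ≤ (transportCost γ).toReal := by
  refine csInf_le ⟨0, fun _ ⟨_, _, _, _, hr⟩ => hr ▸ integral_nonneg fun _ => by positivity⟩ ?_
  exact ⟨γ, h.isProbabilityMeasure, h.1, h.2, (integral_eq_toReal_transportCost γ).symm⟩

end TransportCost

section Wasserstein

variable {E : Type*} [NormedAddCommGroup E] [MeasurableSpace E] [BorelSpace E]
  [SecondCountableTopology E] {μ ν : Measure E} [IsProbabilityMeasure μ] [IsProbabilityMeasure ν]

lemma ofReal_W2sq_le : ENNReal.ofReal (W2sq μ ν) ≤ 2 * (secondMoment μ + secondMoment ν) := by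
  have hprod : IsCoupling ((μ Set.univ)⁻¹ • μ.prod ν) μ ν := IsCoupling.prod (by simp)
  exact (ENNReal.ofReal_le_of_le_toReal hprod.W2sq_le).trans hprod.transportCost_le

lemma exists_isCoupling_transportCost_lt (hμ : secondMoment μ ≠ ∞) (hν : secondMoment ν ≠ ∞)
    {ε : ℝ} (hε : 0 < ε) :
    ∃ γ, IsCoupling γ μ ν ∧ transportCost γ < ENNReal.ofReal (W2sq μ ν + ε) := by
  have hprod : IsCoupling ((μ Set.univ)⁻¹ • μ.prod ν) μ ν := IsCoupling.prod (by simp)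
  obtain ⟨_, ⟨γ, -, h1, h2, rfl⟩, hlt⟩ :=
    exists_lt_of_csInf_lt (by exact ⟨_, _, hprod.isProbabilityMeasure, hprod.1, hprod.2, rfl⟩)
      (lt_add_of_pos_right (W2sq μ ν) hε)
  have hγ : IsCoupling γ μ ν := ⟨h1, h2⟩
  have hfin : transportCost γ ≠ ∞ :=
    ne_top_of_le_ne_top (by finiteness) hγ.transportCost_le
  rw [integral_eq_toReal_transportCost] at hlt
  exact ⟨γ, hγ, (ENNReal.lt_ofReal_iff_toReal_lt hfin).2 hlt⟩

end Wasserstein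

section Scaling

variable {E : Type*} [NormedAddCommGroup E] [NormedSpace ℝ E] [MeasurableSpace E] [BorelSpace E]

lemma secondMoment_map_smul (t : ℝ) (μ : Measure E) :
    secondMoment (μ.map (t • ·)) = ENNReal.ofReal (t ^ 2) * secondMoment μ := by
  rw [secondMoment, lintegral_map (by fun_prop) (by fun_prop), secondMoment,
    ← lintegral_const_mul _ (by fun_prop)]
  simp only [norm_smul, mul_pow, Real.norm_eq_abs, sq_abs,
    ENNReal.ofReal_mul (sq_nonneg t)]

lemma IsCoupling.map_smul {γ : Measure (E × E)} {μ ν : Measure E} (h : IsCoupling γ μ ν)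
    (t : ℝ) : IsCoupling (γ.map (Prod.map (t • ·) (t • ·))) (μ.map (t • ·)) (ν.map (t • ·)) :=
  ⟨by rw [Measure.map_map measurable_fst (by fun_prop), ← h.1,
      Measure.map_map (by fun_prop) measurable_fst]; rfl,
    by rw [Measure.map_map measurable_snd (by fun_prop), ← h.2,
      Measure.map_map (by fun_prop) measurable_snd]; rfl⟩

lemma transportCost_map_smul [SecondCountableTopology E] (t : ℝ) (γ : Measure (E × E)) :
    transportCost (γ.map (Prod.map (t • ·) (t • ·))) =
      ENNReal.ofReal (t ^ 2) * transportCost γ := by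
  rw [transportCost, lintegral_map (by fun_prop) (by fun_prop), transportCost,
    ← lintegral_const_mul _ (by fun_prop)]
  simp only [Prod.map_fst, Prod.map_snd, ← smul_sub, norm_smul, mul_pow, Real.norm_eq_abs,
    sq_abs, ENNReal.ofReal_mul (sq_nonneg t)]

lemma exists_isCoupling_smul_map_smul [SecondCountableTopology E] {μ ν : Measure E}
    [IsProbabilityMeasure μ] [IsProbabilityMeasure ν]
    (hμ : secondMoment μ ≠ ∞) (hν : secondMoment ν ≠ ∞) (t : ℝ) {a : ℝ≥0∞} (ha : a ≤ 1)
    {η : ℝ} (hη : 0 < η) :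
    ∃ γ, IsCoupling γ (a • μ.map (t • ·)) (a • ν.map (t • ·)) ∧
      transportCost γ ≤
        ENNReal.ofReal (t ^ 2) * (a * ENNReal.ofReal (W2sq μ ν) + ENNReal.ofReal η) := by
  obtain ⟨κ, hκ, hcost⟩ := exists_isCoupling_transportCost_lt hμ hν hη
  refine ⟨a • κ.map (Prod.map (t • ·) (t • ·)), (hκ.map_smul t).smul a, ?_⟩
  rw [ENNReal.ofReal_add (W2sq_nonneg μ ν) hη.le] at hcost
  calc transportCost (a • κ.map (Prod.map (t • ·) (t • ·)))
      = ENNReal.ofReal (t ^ 2) * (a * transportCost κ) := by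
        rw [transportCost_smul, transportCost_map_smul, mul_left_comm]
    _ ≤ ENNReal.ofReal (t ^ 2) * (a * ENNReal.ofReal (W2sq μ ν) + a * ENNReal.ofReal η) := by
        rw [← mul_add]; gcongr
    _ ≤ _ := by gcongr; exact mul_le_of_le_one_left' ha

end Scaling

section Annuli

variable {d : ℕ} {σ : Fin d → ℝ}

lemma measurableSet_box (σ : Fin d → ℝ) (c : ℝ) : MeasurableSet (box σ c) := by
  have : box σ c = ⋂ i, (fun x : EuclideanSpace ℝ (Fin d) => x i) ⁻¹'
      Set.Ioc (-(c * σ i)) (c * σ i) := by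
    ext x; simp [box]
  rw [this]
  exact MeasurableSet.iInter fun i => measurableSet_Ioc.preimage (by fun_prop)

lemma measurableSet_Bset (σ : Fin d → ℝ) : ∀ n, MeasurableSet (Bset σ n)
  | 0 => measurableSet_box σ 1
  | _ + 1 => (measurableSet_box σ _).diff (measurableSet_box σ _)

lemma box_mono (hσ : ∀ i, 0 ≤ σ i) {c c' : ℝ} (hc : c ≤ c') : box σ c ⊆ box σ c' :=
  fun _ hx i => by
    have := mul_le_mul_of_nonneg_right hc (hσ i)
    exact ⟨by linarith [(hx i).1], by linarith [(hx i).2]⟩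

lemma Bset_subset_box : ∀ n, Bset σ n ⊆ box σ (2 ^ n)
  | 0 => by simp [Bset]
  | _ + 1 => Set.sdiff_subset

lemma pairwise_disjoint_Bset (hσ : ∀ i, 0 ≤ σ i) :
    Pairwise (Function.onFun Disjoint (Bset σ)) := by
  refine (pairwise_disjoint_on _).2 fun m n hmn => ?_
  obtain ⟨k, rfl⟩ : ∃ k, n = k + 1 := ⟨n - 1, by omega⟩
  exact Set.disjoint_left.2 fun x hxm hxn => hxn.2 <| box_mono hσ
    (pow_le_pow_right₀ one_le_two (Nat.le_of_lt_succ hmn)) (Bset_subset_box m hxm)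

lemma box_subset_iUnion_Bset : ∀ n, box σ (2 ^ n) ⊆ ⋃ k, Bset σ k
  | 0 => fun x hx => Set.mem_iUnion.2 ⟨0, by simpa [Bset] using hx⟩
  | n + 1 => fun x hx => by
    by_cases h : x ∈ box σ (2 ^ n)
    · exact box_subset_iUnion_Bset n h
    · exact Set.mem_iUnion.2 ⟨n + 1, hx, h⟩

lemma iUnion_Bset (hσ : ∀ i, 0 < σ i) : ⋃ n, Bset σ n = Set.univ := by
  refine Set.eq_univ_of_forall fun x => ?_
  have hlarge : ∀ᶠ n : ℕ in Filter.atTop, ∀ i, |x i| < 2 ^ n * σ i :=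
    Filter.eventually_all.2 fun i =>
      ((tendsto_pow_atTop_atTop_of_one_lt one_lt_two).atTop_mul_const
        (hσ i)).eventually_gt_atTop _
  obtain ⟨n, hn⟩ := hlarge.exists
  exact box_subset_iUnion_Bset n fun i => ⟨(abs_lt.1 (hn i)).1, (abs_lt.1 (hn i)).2.le⟩

lemma norm_sq_le_of_mem_box (hσ : ∀ i, σ i ≤ 1) {c : ℝ} (hc : 0 ≤ c)
    {x : EuclideanSpace ℝ (Fin d)} (hx : x ∈ box σ c) : ‖x‖ ^ 2 ≤ d * c ^ 2 := by
  rw [EuclideanSpace.real_norm_sq_eq]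
  calc ∑ i, x i ^ 2 ≤ ∑ _i : Fin d, c ^ 2 := Finset.sum_le_sum fun i _ => by
        have := mul_le_of_le_one_right hc (hσ i)
        exact sq_le_sq' (by linarith [(hx i).1]) (by linarith [(hx i).2])
    _ = d * c ^ 2 := by simp

lemma two_pow_two_mul_le_of_mem_Bset {s : ℝ} (hs : 0 < s) (hsσ : ∀ i, s ≤ σ i) :
    ∀ {n : ℕ} {x : EuclideanSpace ℝ (Fin d)}, x ∈ Bset σ n →
      (2 : ℝ) ^ (2 * n) ≤ 1 + 4 / s ^ 2 * ‖x‖ ^ 2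
  | 0, x, _ => by simp only [mul_zero, pow_zero, le_add_iff_nonneg_right]; positivity
  | n + 1, x, hx => by
    obtain ⟨i, hi⟩ : ∃ i, ¬(-(2 ^ n * σ i) < x i ∧ x i ≤ 2 ^ n * σ i) := by
      simpa [box] using hx.2
    have hxi : 2 ^ n * σ i ≤ |x i| := by
      rw [not_and_or, not_lt, not_le] at hi
      rcases hi with h | h
      · linarith [neg_abs_le (x i)]
      · linarith [le_abs_self (x i)]
    have hnorm : 2 ^ n * s ≤ ‖x‖ := calc
      2 ^ n * s ≤ 2 ^ n * σ i := by gcongr; exact hsσ i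
      _ ≤ |x i| := hxi
      _ ≤ ‖x‖ := by simpa using PiLp.norm_apply_le x i
    calc (2 : ℝ) ^ (2 * (n + 1)) = 4 / s ^ 2 * (2 ^ n * s) ^ 2 := by
          field_simp; ring
      _ ≤ 4 / s ^ 2 * ‖x‖ ^ 2 := by gcongr
      _ ≤ 1 + 4 / s ^ 2 * ‖x‖ ^ 2 := le_add_of_nonneg_left zero_le_one

end Annuli

section Partition

variable {Ω ι : Type*} [MeasurableSpace Ω] [Countable ι]

lemma measure_smul_cond (μ : Measure Ω) [IsFiniteMeasure μ] (s : Set Ω) :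
    μ s • μ[|s] = μ.restrict s := by
  rcases eq_or_ne (μ s) 0 with h | h
  · simp [h, Measure.restrict_eq_zero.2 h]
  · rw [ProbabilityTheory.cond, smul_smul, ENNReal.mul_inv_cancel h (measure_ne_top μ s),
      one_smul]

lemma sum_smul_cond_add_sum (μ : Measure Ω) [IsFiniteMeasure μ] {A : ι → Set Ω}
    (hA : ∀ i, MeasurableSet (A i)) (hdisj : Pairwise (Function.onFun Disjoint A))
    (hcover : ⋃ i, A i = Set.univ) {c : ι → ℝ≥0∞} (hc : ∀ i, c i ≤ μ (A i)) :
    Measure.sum (fun i => c i • μ[|A i]) + Measure.sum (fun i => (μ (A i) - c i) • μ[|A i]) =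
      μ := by
  simp_rw [Measure.sum_add_sum, ← add_smul, add_tsub_cancel_of_le (hc _), measure_smul_cond]
  rw [← Measure.restrict_iUnion hdisj hA, hcover, Measure.restrict_univ]

lemma tsum_mul_measure_le_lintegral (μ : Measure Ω) {A : ι → Set Ω}
    (hA : ∀ i, MeasurableSet (A i)) (hdisj : Pairwise (Function.onFun Disjoint A))
    {f : ι → ℝ≥0∞} {w : Ω → ℝ≥0∞} (hw : Measurable w) (hfw : ∀ i, ∀ x ∈ A i, f i ≤ w x) :
    ∑' i, f i * μ (A i) ≤ ∫⁻ x, w x ∂μ :=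
  calc ∑' i, f i * μ (A i) = ∑' i, ∫⁻ _ in A i, f i ∂μ := by simp
    _ ≤ ∑' i, ∫⁻ x in A i, w x ∂μ := ENNReal.tsum_le_tsum fun i => setLIntegral_mono hw (hfw i)
    _ = ∫⁻ x in ⋃ i, A i, w x ∂μ := (lintegral_iUnion hA hdisj w).symm
    _ ≤ ∫⁻ x, w x ∂μ := setLIntegral_le_lintegral _ _

end Partition

section Gluing

variable {E : Type*} [NormedAddCommGroup E] [MeasurableSpace E]

lemma secondMoment_cond_le (μ : Measure E) {s : Set E}
    (hs : MeasurableSet s) {R : ℝ} (hR : ∀ x ∈ s, ‖x‖ ^ 2 ≤ R) :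
    secondMoment μ[|s] ≤ ENNReal.ofReal R :=
  calc secondMoment μ[|s] ≤ ∫⁻ _, ENNReal.ofReal R ∂μ[|s] :=
        lintegral_mono_ae <| (ae_cond_mem hs).mono fun x hx => ENNReal.ofReal_le_ofReal (hR x hx)
    _ ≤ ENNReal.ofReal R := by
        rw [lintegral_const]; exact mul_le_of_le_one_right' prob_le_one

lemma exists_isCoupling_of_partition [OpensMeasurableSpace E] {ι : Type*} [Countable ι]
    {μ ν : Measure E}
    [IsProbabilityMeasure μ] [IsProbabilityMeasure ν] {A : ι → Set E}
    (hA : ∀ i, MeasurableSet (A i)) (hdisj : Pairwise (Function.onFun Disjoint A))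
    (hcover : ⋃ i, A i = Set.univ) {γ : ι → Measure (E × E)}
    (hγ : ∀ i, IsCoupling (γ i) (min (μ (A i)) (ν (A i)) • μ[|A i])
      (min (μ (A i)) (ν (A i)) • ν[|A i])) :
    ∃ γ', IsCoupling γ' μ ν ∧ transportCost γ' ≤ ∑' i, (transportCost (γ i) +
      2 * ((μ (A i) - min (μ (A i)) (ν (A i))) * secondMoment μ[|A i] +
        (ν (A i) - min (μ (A i)) (ν (A i))) * secondMoment ν[|A i])) := by
  set c := fun i => min (μ (A i)) (ν (A i))
  set μ' := Measure.sum fun i => (μ (A i) - c i) • μ[|A i]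
  set ν' := Measure.sum fun i => (ν (A i) - c i) • ν[|A i]
  have hμ := sum_smul_cond_add_sum μ hA hdisj hcover (c := c) fun i => min_le_left _ _
  have hν := sum_smul_cond_add_sum ν hA hdisj hcover (c := c) fun i => min_le_right _ _
  have : IsFiniteMeasure (Measure.sum fun i => c i • μ[|A i]) :=
    isFiniteMeasure_of_le μ ((Measure.le_add_right le_rfl).trans_eq hμ)
  have : IsFiniteMeasure μ' := isFiniteMeasure_of_le μ ((Measure.le_add_left le_rfl).trans_eq hμ)
  have : IsFiniteMeasure ν' := isFiniteMeasure_of_le ν ((Measure.le_add_left le_rfl).trans_eq hν)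
  have hsum := IsCoupling.sum hγ
  have hprod := IsCoupling.prod (hsum.measure_univ_eq_of_add (μ' := μ') (ν' := ν')
    (by rw [hμ, hν, measure_univ, measure_univ]))
  refine ⟨_, hμ ▸ hν ▸ hsum.add hprod, ?_⟩
  calc transportCost (Measure.sum γ + (μ' Set.univ)⁻¹ • μ'.prod ν')
      ≤ ∑' i, transportCost (γ i) + 2 * (secondMoment μ' + secondMoment ν') := by
        rw [transportCost_add, transportCost_sum]; gcongr; exact hprod.transportCost_le
    _ = _ := by
        simp only [c, μ', ν', secondMoment_sum, secondMoment_smul, ← ENNReal.tsum_add,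
          ← ENNReal.tsum_mul_left]

end Gluing

section RescaledRestriction

variable {d : ℕ} {σ : Fin d → ℝ}

lemma secondMoment_cond_Bset_le (hσ : ∀ i, σ i ≤ 1) (μ : Measure (EuclideanSpace ℝ (Fin d)))
    (n : ℕ) : secondMoment μ[|Bset σ n] ≤ d * 2 ^ (2 * n) := by
  refine (secondMoment_cond_le μ (measurableSet_Bset σ n) fun x hx =>
    norm_sq_le_of_mem_box hσ (by positivity) (Bset_subset_box n hx)).trans_eq ?_
  rw [← pow_mul, mul_comm n, ENNReal.ofReal_mul (by positivity), ENNReal.ofReal_natCast,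
    ENNReal.ofReal_pow zero_le_two, ENNReal.ofReal_ofNat]

lemma map_smul_RB (μ : Measure (EuclideanSpace ℝ (Fin d))) (B : Set (EuclideanSpace ℝ (Fin d)))
    (n : ℕ) : (RB μ B n).map ((2 : ℝ) ^ n • ·) = μ[|B] := by
  have hid : ((2 : ℝ) ^ n • ·) ∘ (((2 : ℝ) ^ n)⁻¹ • ·) =
      (id : EuclideanSpace ℝ (Fin d) → _) := by
    funext x; simp [smul_smul]
  rw [RB, Measure.map_map (by fun_prop) (by fun_prop), hid, Measure.map_id]
  rfl

lemma isProbabilityMeasure_RB (μ : Measure (EuclideanSpace ℝ (Fin d))) [IsFiniteMeasure μ]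
    {B : Set (EuclideanSpace ℝ (Fin d))} (hB : μ B ≠ 0) (n : ℕ) :
    IsProbabilityMeasure (RB μ B n) :=
  have := cond_isProbabilityMeasure hB
  show IsProbabilityMeasure (μ[|B].map _) from Measure.isProbabilityMeasure_map (by fun_prop)

lemma secondMoment_RB_Bset_le (hσ : ∀ i, σ i ≤ 1) (μ : Measure (EuclideanSpace ℝ (Fin d)))
    (n : ℕ) : secondMoment (RB μ (Bset σ n) n) ≤ d :=
  calc secondMoment (RB μ (Bset σ n) n)
      = ENNReal.ofReal ((((2 : ℝ) ^ n)⁻¹) ^ 2) * secondMoment μ[|Bset σ n] :=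
        secondMoment_map_smul _ _
    _ ≤ ENNReal.ofReal ((((2 : ℝ) ^ n)⁻¹) ^ 2) * (d * 2 ^ (2 * n)) := by
        gcongr; exact secondMoment_cond_Bset_le hσ μ n
    _ = d := by
        rw [mul_left_comm, ← ENNReal.ofReal_ofNat, ← ENNReal.ofReal_pow zero_le_two,
          ← ENNReal.ofReal_mul (by positivity), inv_pow, ← pow_mul, mul_comm n,
          inv_mul_cancel₀ (by positivity), ENNReal.ofReal_one, mul_one]

end RescaledRestriction

section AnnulusCouplings

variable {d : ℕ} {σ : Fin d → ℝ} {μ ν : Measure (EuclideanSpace ℝ (Fin d))}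
  [IsProbabilityMeasure μ] [IsProbabilityMeasure ν]

lemma exists_isCoupling_cond_Bset (hσ : ∀ i, σ i ≤ 1) (n : ℕ) {η : ℝ} (hη : 0 < η) :
    ∃ γ, IsCoupling γ (min (μ (Bset σ n)) (ν (Bset σ n)) • μ[|Bset σ n])
        (min (μ (Bset σ n)) (ν (Bset σ n)) • ν[|Bset σ n]) ∧
      transportCost γ ≤ 2 ^ (2 * n) * (min (μ (Bset σ n)) (ν (Bset σ n)) *
        ENNReal.ofReal (W2sq (RB μ (Bset σ n) n) (RB ν (Bset σ n) n)) + ENNReal.ofReal η) := by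
  rcases eq_or_ne (min (μ (Bset σ n)) (ν (Bset σ n))) 0 with hc | hc
  · exact ⟨0, by simp [IsCoupling, hc], by simp [transportCost]⟩
  obtain ⟨hμB, hνB⟩ : μ (Bset σ n) ≠ 0 ∧ ν (Bset σ n) ≠ 0 := by simpa [not_or] using hc
  have := isProbabilityMeasure_RB μ hμB n
  have := isProbabilityMeasure_RB ν hνB n
  obtain ⟨γ, hγ, hcost⟩ := exists_isCoupling_smul_map_smul
    (ne_top_of_le_ne_top (ENNReal.natCast_ne_top d) (secondMoment_RB_Bset_le hσ μ n))
    (ne_top_of_le_ne_top (ENNReal.natCast_ne_top d) (secondMoment_RB_Bset_le hσ ν n))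
    ((2 : ℝ) ^ n) ((min_le_left _ _).trans (prob_le_one (μ := μ))) hη
  rw [map_smul_RB, map_smul_RB] at hγ
  refine ⟨γ, hγ, hcost.trans_eq ?_⟩
  rw [← pow_mul, mul_comm n, ENNReal.ofReal_pow zero_le_two, ENNReal.ofReal_ofNat]

lemma min_mul_ofReal_W2sq_RB_le (hσ : ∀ i, σ i ≤ 1) (n : ℕ) :
    min (μ (Bset σ n)) (ν (Bset σ n)) *
      ENNReal.ofReal (W2sq (RB μ (Bset σ n) n) (RB ν (Bset σ n) n)) ≤ 4 * d * μ (Bset σ n) := by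
  rcases eq_or_ne (min (μ (Bset σ n)) (ν (Bset σ n))) 0 with hc | hc
  · simp [hc]
  obtain ⟨hμB, hνB⟩ : μ (Bset σ n) ≠ 0 ∧ ν (Bset σ n) ≠ 0 := by simpa [not_or] using hc
  have := isProbabilityMeasure_RB μ hμB n
  have := isProbabilityMeasure_RB ν hνB n
  calc min (μ (Bset σ n)) (ν (Bset σ n)) *
        ENNReal.ofReal (W2sq (RB μ (Bset σ n) n) (RB ν (Bset σ n) n))
      ≤ μ (Bset σ n) * (2 * (d + d)) := by
        gcongr
        · exact min_le_left _ _
        · exact ofReal_W2sq_le.trans (by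
            gcongr <;> exact secondMoment_RB_Bset_le hσ _ n)
    _ = 4 * d * μ (Bset σ n) := by ring

end AnnulusCouplings

lemma toReal_tsub_min_add_tsub_min {a b : ℝ≥0∞} (ha : a ≠ ∞) (hb : b ≠ ∞) :
    (a - min a b + (b - min a b)).toReal = |a.toReal - b.toReal| := by
  rcases le_total a b with h | h
  · rw [min_eq_left h, tsub_self, zero_add, ENNReal.toReal_sub_of_le h hb,
      abs_of_nonpos (by linarith [ENNReal.toReal_mono hb h]), neg_sub]
  · rw [min_eq_right h, tsub_self, add_zero, ENNReal.toReal_sub_of_le h ha,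
      abs_of_nonneg (by linarith [ENNReal.toReal_mono ha h])]

section AnnulusTerm

variable {d : ℕ} {σ : Fin d → ℝ}

noncomputable def annulusTerm (σ : Fin d → ℝ) (μ ν : Measure (EuclideanSpace ℝ (Fin d))) (n : ℕ) :
    ℝ≥0∞ :=
  2 ^ (2 * n) * (μ (Bset σ n) - min (μ (Bset σ n)) (ν (Bset σ n)) +
    (ν (Bset σ n) - min (μ (Bset σ n)) (ν (Bset σ n))) +
    min (μ (Bset σ n)) (ν (Bset σ n)) *
      ENNReal.ofReal (W2sq (RB μ (Bset σ n) n) (RB ν (Bset σ n) n)))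

variable (μ ν : Measure (EuclideanSpace ℝ (Fin d))) [IsFiniteMeasure μ] [IsFiniteMeasure ν]

lemma annulusTerm_ne_top (n : ℕ) : annulusTerm σ μ ν n ≠ ∞ := by
  have := measure_ne_top ν (Bset σ n)
  have : min (μ (Bset σ n)) (ν (Bset σ n)) ≠ ∞ :=
    ((min_le_left _ _).trans_lt (measure_lt_top μ _)).ne
  unfold annulusTerm
  finiteness

lemma toReal_annulusTerm (n : ℕ) :
    (annulusTerm σ μ ν n).toReal = (2 : ℝ) ^ (2 * n) *
      (|(μ (Bset σ n)).toReal - (ν (Bset σ n)).toReal| +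
        min (μ (Bset σ n)).toReal (ν (Bset σ n)).toReal *
          W2sq (RB μ (Bset σ n) n) (RB ν (Bset σ n) n)) := by
  have hμ := measure_ne_top μ (Bset σ n)
  have hν := measure_ne_top ν (Bset σ n)
  have : min (μ (Bset σ n)) (ν (Bset σ n)) ≠ ∞ :=
    ((min_le_left _ _).trans_lt (measure_lt_top μ _)).ne
  rw [annulusTerm, ENNReal.toReal_mul, ENNReal.toReal_add (by finiteness) (by finiteness),
    toReal_tsub_min_add_tsub_min hμ hν, ENNReal.toReal_mul, ENNReal.toReal_min hμ hν,
    ENNReal.toReal_ofReal (W2sq_nonneg _ _)]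
  simp

end AnnulusTerm

section MainBound

variable {d : ℕ} {σ : Fin d → ℝ}

lemma tsum_two_pow_mul_measure_Bset_ne_top (hσ : ∀ i, 0 < σ i) {s : ℝ} (hs : 0 < s)
    (hsσ : ∀ i, s ≤ σ i) (μ : Measure (EuclideanSpace ℝ (Fin d))) [IsFiniteMeasure μ]
    (hμ : secondMoment μ ≠ ∞) : ∑' n, 2 ^ (2 * n) * μ (Bset σ n) ≠ ∞ := by
  refine ne_top_of_le_ne_top ?_ (tsum_mul_measure_le_lintegral μ (measurableSet_Bset σ)
    (pairwise_disjoint_Bset fun i => (hσ i).le)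
    (w := fun x => ENNReal.ofReal (1 + 4 / s ^ 2 * ‖x‖ ^ 2)) (by fun_prop) fun n x hx => ?_)
  · have hw : ∀ x : EuclideanSpace ℝ (Fin d), ENNReal.ofReal (1 + 4 / s ^ 2 * ‖x‖ ^ 2) =
        1 + ENNReal.ofReal (4 / s ^ 2) * ENNReal.ofReal (‖x‖ ^ 2) := fun x => by
      rw [ENNReal.ofReal_add zero_le_one (by positivity), ENNReal.ofReal_one,
        ENNReal.ofReal_mul (by positivity)]
    rw [lintegral_congr hw, lintegral_add_left measurable_const, lintegral_const,
      lintegral_const_mul _ (by fun_prop)]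
    exact ENNReal.add_ne_top.2 ⟨by finiteness, ENNReal.mul_ne_top ENNReal.ofReal_ne_top hμ⟩
  · calc (2 : ℝ≥0∞) ^ (2 * n) = ENNReal.ofReal (2 ^ (2 * n)) := by
          rw [ENNReal.ofReal_pow zero_le_two, ENNReal.ofReal_ofNat]
      _ ≤ _ := ENNReal.ofReal_le_ofReal (two_pow_two_mul_le_of_mem_Bset hs hsσ hx)

lemma add_leftover_le_annulusTerm {μ ν : Measure (EuclideanSpace ℝ (Fin d))} (hd : 0 < d)
    (hσ : ∀ i, σ i ≤ 1) (n : ℕ) {x y : ℝ≥0∞}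
    (hx : x ≤ 2 ^ (2 * n) * (min (μ (Bset σ n)) (ν (Bset σ n)) *
      ENNReal.ofReal (W2sq (RB μ (Bset σ n) n) (RB ν (Bset σ n) n)) + y)) :
    x + 2 * ((μ (Bset σ n) - min (μ (Bset σ n)) (ν (Bset σ n))) * secondMoment μ[|Bset σ n] +
      (ν (Bset σ n) - min (μ (Bset σ n)) (ν (Bset σ n))) * secondMoment ν[|Bset σ n]) ≤
      2 * d * annulusTerm σ μ ν n + 2 ^ (2 * n) * y := by
  set q : ℝ≥0∞ := 2 ^ (2 * n)
  set a := μ (Bset σ n)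
  set b := ν (Bset σ n)
  set c := min a b
  set w := ENNReal.ofReal (W2sq (RB μ (Bset σ n) n) (RB ν (Bset σ n) n))
  have h2d : (1 : ℝ≥0∞) ≤ 2 * d := by norm_cast; omega
  calc x + 2 * ((a - c) * secondMoment μ[|Bset σ n] + (b - c) * secondMoment ν[|Bset σ n])
      ≤ q * (c * w + y) + 2 * ((a - c) * (d * q) + (b - c) * (d * q)) := by
        gcongr
        exacts [secondMoment_cond_Bset_le hσ μ n, secondMoment_cond_Bset_le hσ ν n]
    _ = 1 * (q * (c * w)) + 2 * d * (q * (a - c + (b - c))) + q * y := by ring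
    _ ≤ 2 * d * (q * (c * w)) + 2 * d * (q * (a - c + (b - c))) + q * y := by gcongr
    _ = 2 * d * annulusTerm σ μ ν n + q * y := by rw [annulusTerm]; ring

lemma tsum_two_pow_mul_ofReal_geometric {ε : ℝ} (hε : 0 < ε) :
    ∑' n : ℕ, (2 : ℝ≥0∞) ^ (2 * n) * ENNReal.ofReal (ε / 2 / 2 ^ n / 2 ^ (2 * n)) =
      ENNReal.ofReal ε := by
  have hterm : ∀ n : ℕ, (2 : ℝ≥0∞) ^ (2 * n) * ENNReal.ofReal (ε / 2 / 2 ^ n / 2 ^ (2 * n)) =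
      ENNReal.ofReal (ε / 2 / 2 ^ n) := fun n => by
    rw [← ENNReal.ofReal_ofNat, ← ENNReal.ofReal_pow zero_le_two,
      ← ENNReal.ofReal_mul (by positivity)]
    congr 1
    field_simp
  rw [tsum_congr hterm, ← ENNReal.ofReal_tsum_of_nonneg (fun n => by positivity)
    (summable_geometric_two' ε), tsum_geometric_two']

variable {μ ν : Measure (EuclideanSpace ℝ (Fin d))} [IsProbabilityMeasure μ]
  [IsProbabilityMeasure ν]

lemma tsum_annulusTerm_ne_top (hσ : ∀ i, 0 < σ i) (hσ1 : ∀ i, σ i ≤ 1) {s : ℝ} (hs : 0 < s)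
    (hsσ : ∀ i, s ≤ σ i) (hμ : secondMoment μ ≠ ∞) (hν : secondMoment ν ≠ ∞) :
    ∑' n, annulusTerm σ μ ν n ≠ ∞ := by
  have hle : ∀ n, annulusTerm σ μ ν n ≤
      (1 + 4 * d) * (2 ^ (2 * n) * μ (Bset σ n)) + 2 ^ (2 * n) * ν (Bset σ n) := fun n => by
    calc annulusTerm σ μ ν n
        ≤ 2 ^ (2 * n) * (μ (Bset σ n) + ν (Bset σ n) + 4 * d * μ (Bset σ n)) := by
          unfold annulusTerm
          gcongr _ * (?_ + ?_ + ?_)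
          exacts [tsub_le_self, tsub_le_self, min_mul_ofReal_W2sq_RB_le (μ := μ) (ν := ν) hσ1 n]
      _ = _ := by ring
  refine ne_top_of_le_ne_top ?_ (ENNReal.tsum_le_tsum hle)
  rw [ENNReal.tsum_add, ENNReal.tsum_mul_left]
  have := tsum_two_pow_mul_measure_Bset_ne_top hσ hs hsσ μ hμ
  have := tsum_two_pow_mul_measure_Bset_ne_top hσ hs hsσ ν hν
  finiteness

lemma W2sq_le_two_mul_tsum_annulusTerm_add (hd : 0 < d) (hσ : ∀ i, 0 < σ i)
    (hσ1 : ∀ i, σ i ≤ 1) (hG : ∑' n, annulusTerm σ μ ν n ≠ ∞) {ε : ℝ} (hε : 0 < ε) :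
    W2sq μ ν ≤ 2 * d * (∑' n, annulusTerm σ μ ν n).toReal + ε := by
  choose γ hγ hcost using fun n => exists_isCoupling_cond_Bset (μ := μ) (ν := ν) hσ1 n
    (η := ε / 2 / 2 ^ n / 2 ^ (2 * n)) (by positivity)
  obtain ⟨γ', hγ', hcost'⟩ := exists_isCoupling_of_partition (measurableSet_Bset σ)
    (pairwise_disjoint_Bset fun i => (hσ i).le) (iUnion_Bset hσ) hγ
  have hbound : transportCost γ' ≤ 2 * d * ∑' n, annulusTerm σ μ ν n + ENNReal.ofReal ε :=
    calc transportCost γ' ≤ _ := hcost'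
      _ ≤ ∑' n, (2 * d * annulusTerm σ μ ν n +
            2 ^ (2 * n) * ENNReal.ofReal (ε / 2 / 2 ^ n / 2 ^ (2 * n))) :=
          ENNReal.tsum_le_tsum fun n => add_leftover_le_annulusTerm hd hσ1 n (hcost n)
      _ = _ := by
          rw [ENNReal.tsum_add, ENNReal.tsum_mul_left, tsum_two_pow_mul_ofReal_geometric hε]
  calc W2sq μ ν ≤ (transportCost γ').toReal := hγ'.W2sq_le
    _ ≤ (2 * d * ∑' n, annulusTerm σ μ ν n + ENNReal.ofReal ε).toReal :=
        ENNReal.toReal_mono (by finiteness) hbound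
    _ = 2 * d * (∑' n, annulusTerm σ μ ν n).toReal + ε := by
        rw [ENNReal.toReal_add (by finiteness) ENNReal.ofReal_ne_top,
          ENNReal.toReal_ofReal hε.le]
        simp

end MainBound

/-- annulus decomposition bound for `W₂²`. -/
theorem stmt4 (d : ℕ) (hd : 0 < d) (σ : Fin d → ℝ)
    (hσ1 : σ ⟨0, hd⟩ = 1) (hσmono : ∀ i j : Fin d, i ≤ j → σ j ≤ σ i)
    (hσpos : ∀ i, 0 < σ i)
    (μ ν : Measure (EuclideanSpace ℝ (Fin d)))
    [IsProbabilityMeasure μ] [IsProbabilityMeasure ν]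
    (hμ2 : Integrable (fun x => ‖x‖ ^ 2) μ) (hν2 : Integrable (fun x => ‖x‖ ^ 2) ν) :
    W2sq μ ν ≤ 2 * d * ∑' n : ℕ, (2 : ℝ) ^ (2 * n) *
      (|(μ (Bset σ n)).toReal - (ν (Bset σ n)).toReal| +
        min (μ (Bset σ n)).toReal (ν (Bset σ n)).toReal *
          W2sq (RB μ (Bset σ n) n) (RB ν (Bset σ n) n)) := by
  have : Nonempty (Fin d) := ⟨⟨0, hd⟩⟩
  obtain ⟨j, hj⟩ := Finite.exists_min σ
  have hσle : ∀ i, σ i ≤ 1 := fun i => hσ1 ▸ hσmono ⟨0, hd⟩ i (Nat.zero_le i)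
  have hG := tsum_annulusTerm_ne_top hσpos hσle (hσpos j) hj hμ2.lintegral_lt_top.ne
    hν2.lintegral_lt_top.ne
  rw [← tsum_congr (toReal_annulusTerm μ ν), ← ENNReal.tsum_toReal_eq (annulusTerm_ne_top μ ν)]
  exact le_of_forall_pos_le_add fun ε hε =>
    W2sq_le_two_mul_tsum_annulusTerm_add hd hσpos hσle hG hε
end

section
/- Let μ and ν be probability measures on ℝ^d and let {B_n}_{n≥0} be a countable measurable partition of ℝ^d. Set q := Σ_{n≥0} (μ(B_n) − ν(B_n))_+, and assume q > 0. For each n with min(μ(B_n), ν(B_n)) > 0 let π̃_n be any coupling of μ|_{B_n}/μ(B_n) and ν|_{B_n}/ν(B_n); define α := Σ_{n≥0} (μ(B_n) − ν(B_n))_+ · μ|_{B_n}/μ(B_n) and β := Σ_{n≥0} (ν(B_n) − μ(B_n))_+ · ν|_{B_n}/ν(B_n). Then q = Σ_{n≥0} (ν(B_n) − μ(B_n))_+ = 1 − Σ_{n≥0} min(μ(B_n), ν(B_n)), and π := Σ_{n≥0} min(μ(B_n), ν(B_n)) · π̃_n + (α ⊗ β)/q is a probability measure on ℝ^d × ℝ^d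 whose first marginal is μ and whose second marginal is ν. -/
open MeasureTheory ProbabilityTheory
open scoped ENNReal

private lemma map_sum_aux {α β : Type*} [MeasurableSpace α] [MeasurableSpace β]
    {f : ℕ → Measure α} {g : α → β} (hg : Measurable g) :
    (Measure.sum f).map g = Measure.sum fun n => (f n).map g := by
  ext s hs
  rw [Measure.map_apply hg hs, Measure.sum_apply _ (hg hs), Measure.sum_apply _ hs]
  exact tsum_congr fun n => (Measure.map_apply hg hs).symm

private lemma min_add_sub_aux (a b : ℝ≥0∞) : min a b + (a - b) = a := by
  rcases le_total a b with h | h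
  · simp [min_eq_left h, tsub_eq_zero_of_le h]
  · rw [min_eq_right h, add_tsub_cancel_of_le h]

/-- gluing couplings along a countable measurable partition yields a
coupling of `μ` and `ν`. -/
theorem stmt8 {α : Type*} [MeasurableSpace α] (μ ν : Measure α)
    [IsProbabilityMeasure μ] [IsProbabilityMeasure ν]
    (B : ℕ → Set α) (hBmeas : ∀ n, MeasurableSet (B n))
    (hBdisj : Pairwise (Function.onFun Disjoint B))
    (hBcover : (⋃ n, B n) = Set.univ)
    (q : ℝ≥0∞) (hq : q = ∑' n, (μ (B n) - ν (B n))) (hqpos : 0 < q)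
    (π' : ℕ → Measure (α × α))
    (hπ' : ∀ n, 0 < min (μ (B n)) (ν (B n)) →
      IsProbabilityMeasure (π' n) ∧
        (π' n).map Prod.fst = (μ (B n))⁻¹ • μ.restrict (B n) ∧
        (π' n).map Prod.snd = (ν (B n))⁻¹ • ν.restrict (B n)) :
    q = ∑' n, (ν (B n) - μ (B n)) ∧
    q = 1 - ∑' n, min (μ (B n)) (ν (B n)) ∧
    (let a : Measure α :=
        Measure.sum fun n => (μ (B n) - ν (B n)) • ((μ (B n))⁻¹ • μ.restrict (B n));
      let b : Measure α :=
        Measure.sum fun n => (ν (B n) - μ (B n)) • ((ν (B n))⁻¹ • ν.restrict (B n));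
      let π : Measure (α × α) :=
        (Measure.sum fun n => min (μ (B n)) (ν (B n)) • π' n) + q⁻¹ • a.prod b;
      IsProbabilityMeasure π ∧ π.map Prod.fst = μ ∧ π.map Prod.snd = ν) := by
  have hμ1 : ∑' n, μ (B n) = 1 := by
    rw [← measure_iUnion hBdisj hBmeas, hBcover, measure_univ]
  have hν1 : ∑' n, ν (B n) = 1 := by
    rw [← measure_iUnion hBdisj hBmeas, hBcover, measure_univ]
  have hmle : ∑' n, min (μ (B n)) (ν (B n)) ≤ 1 :=
    hμ1 ▸ ENNReal.tsum_le_tsum fun n => min_le_left _ _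
  have hmne : ∑' n, min (μ (B n)) (ν (B n)) ≠ ∞ := (lt_of_le_of_lt hmle ENNReal.one_lt_top).ne
  have hsplitμ : ∑' n, (μ (B n) - ν (B n)) + ∑' n, min (μ (B n)) (ν (B n)) = 1 := by
    rw [← ENNReal.tsum_add, ← hμ1]
    exact tsum_congr fun n => by rw [add_comm, min_add_sub_aux]
  have hsplitν : ∑' n, (ν (B n) - μ (B n)) + ∑' n, min (μ (B n)) (ν (B n)) = 1 := by
    rw [← ENNReal.tsum_add, ← hν1]
    exact tsum_congr fun n => by rw [add_comm, min_comm, min_add_sub_aux]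
  have h2 : q = 1 - ∑' n, min (μ (B n)) (ν (B n)) :=
    hq.trans (ENNReal.eq_sub_of_add_eq hmne hsplitμ)
  have h1 : q = ∑' n, (ν (B n) - μ (B n)) :=
    h2.trans (ENNReal.eq_sub_of_add_eq hmne hsplitν).symm
  refine ⟨h1, h2, ?_⟩
  intro a b π
  have hq1 : q ≤ 1 := h2 ▸ tsub_le_self
  have hqne : q ≠ ∞ := (lt_of_le_of_lt hq1 ENNReal.one_lt_top).ne
  have hqq : q⁻¹ * q = 1 := ENNReal.inv_mul_cancel hqpos.ne' hqne
  -- totals of a and b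
  have hauniv : a Set.univ = q := by
    rw [hq, Measure.sum_apply _ MeasurableSet.univ]
    refine tsum_congr fun n => ?_
    simp only [Measure.smul_apply, smul_eq_mul, Measure.restrict_apply_univ]
    rcases eq_or_ne (μ (B n)) 0 with h | h
    · simp [h, zero_tsub]
    · rw [ENNReal.inv_mul_cancel h (measure_ne_top μ _), mul_one]
  have hbuniv : b Set.univ = q := by
    rw [h1, Measure.sum_apply _ MeasurableSet.univ]
    refine tsum_congr fun n => ?_
    simp only [Measure.smul_apply, smul_eq_mul, Measure.restrict_apply_univ]
    rcases eq_or_ne (ν (B n)) 0 with h | h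
    · simp [h, zero_tsub]
    · rw [ENNReal.inv_mul_cancel h (measure_ne_top ν _), mul_one]
  haveI : IsFiniteMeasure a := ⟨hauniv ▸ lt_of_le_of_lt hq1 ENNReal.one_lt_top⟩
  haveI : IsFiniteMeasure b := ⟨hbuniv ▸ lt_of_le_of_lt hq1 ENNReal.one_lt_top⟩
  -- first marginal
  have hfst : π.map Prod.fst = μ := by
    have hprod : (q⁻¹ • a.prod b).map Prod.fst = a := by
      rw [Measure.map_smul, Measure.map_fst_prod, hbuniv, smul_smul, hqq, one_smul]
    calc π.map Prod.fst
        = (Measure.sum fun n => (min (μ (B n)) (ν (B n)) • π' n).map Prod.fst) + a := by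
          rw [Measure.map_add _ _ measurable_fst, map_sum_aux measurable_fst, hprod]
      _ = Measure.sum fun n => μ.restrict (B n) := by
          rw [show a = Measure.sum fun n =>
              (μ (B n) - ν (B n)) • ((μ (B n))⁻¹ • μ.restrict (B n)) from rfl,
            Measure.sum_add_sum]
          congr 1
          funext n
          rw [Measure.map_smul]
          rcases eq_or_ne (μ (B n)) 0 with h0 | h0
          · have hr : μ.restrict (B n) = 0 := by
              rw [Measure.restrict_eq_zero]; exact h0
            simp [h0, hr]
          · have hcancel : (μ (B n)) • ((μ (B n))⁻¹ • μ.restrict (B n)) = μ.restrict (B n) := by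
              rw [smul_smul, ENNReal.mul_inv_cancel h0 (measure_ne_top μ _), one_smul]
            rcases eq_or_ne (min (μ (B n)) (ν (B n))) 0 with hm0 | hm0
            · have hν0 : ν (B n) = 0 := by
                rcases min_eq_iff.mp hm0 with ⟨h, _⟩ | ⟨h, _⟩
                · exact absurd h h0
                · exact h
              rw [hm0, zero_smul, zero_add, hν0, tsub_zero, hcancel]
            · obtain ⟨_, hfst', _⟩ := hπ' n (pos_iff_ne_zero.mpr hm0)
              rw [hfst', ← add_smul, min_add_sub_aux, hcancel]
      _ = μ := by rw [← Measure.restrict_iUnion hBdisj hBmeas, hBcover, Measure.restrict_univ]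
  have hsnd : π.map Prod.snd = ν := by
    have hprod : (q⁻¹ • a.prod b).map Prod.snd = b := by
      rw [Measure.map_smul, Measure.map_snd_prod, hauniv, smul_smul, hqq, one_smul]
    calc π.map Prod.snd
        = (Measure.sum fun n => (min (μ (B n)) (ν (B n)) • π' n).map Prod.snd) + b := by
          rw [Measure.map_add _ _ measurable_snd, map_sum_aux measurable_snd, hprod]
      _ = Measure.sum fun n => ν.restrict (B n) := by
          rw [show b = Measure.sum fun n =>
              (ν (B n) - μ (B n)) • ((ν (B n))⁻¹ • ν.restrict (B n)) from rfl,
            Measure.sum_add_sum]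
          congr 1
          funext n
          rw [Measure.map_smul]
          rcases eq_or_ne (ν (B n)) 0 with h0 | h0
          · have hr : ν.restrict (B n) = 0 := by
              rw [Measure.restrict_eq_zero]; exact h0
            simp [h0, hr]
          · have hcancel : (ν (B n)) • ((ν (B n))⁻¹ • ν.restrict (B n)) = ν.restrict (B n) := by
              rw [smul_smul, ENNReal.mul_inv_cancel h0 (measure_ne_top ν _), one_smul]
            rcases eq_or_ne (min (μ (B n)) (ν (B n))) 0 with hm0 | hm0
            · have hμ0 : μ (B n) = 0 := by
                rcases min_eq_iff.mp hm0 with ⟨h, _⟩ | ⟨h, _⟩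
                · exact h
                · exact absurd h h0
              rw [hm0, zero_smul, zero_add, hμ0, tsub_zero, hcancel]
            · obtain ⟨_, _, hsnd'⟩ := hπ' n (pos_iff_ne_zero.mpr hm0)
              rw [hsnd', ← add_smul, min_comm, min_add_sub_aux, hcancel]
      _ = ν := by rw [← Measure.restrict_iUnion hBdisj hBmeas, hBcover, Measure.restrict_univ]
  refine ⟨⟨?_⟩, hfst, hsnd⟩
  have := congrArg (fun m : Measure α => m Set.univ) hfst
  simpa [Measure.map_apply measurable_fst MeasurableSet.univ] using this
end
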